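/- Let d be a prime. Then there exist d-adic integers a₁, a₂, …, a_{d−1} ∈ ℤ_d with a_i ≡ i (mod d) for each i, such that for every n ≥ 1 and every c ∈ ℤ, if c ≡ 0 (mod d^n) or c ≡ a_i (mod d^n) in ℤ_d for some 1 ≤ i ≤ d−1, then d^n ∈ D_{d,c}. -/

import Mathlib

/-- `W d c n = φ^n(0)` where `φ(x) = x^d + c`. -/
def W (d : ℕ) (c : ℤ) (n : ℕ) : ℤ := (fun x : ℤ => x ^ d + c)^[n] 0

/-- `D_{d,c} = {n : n ≥ 1 and n ∣ W_n}`. -/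
def Dset (d : ℕ) (c : ℤ) : Set ℕ := {n | 1 ≤ n ∧ (n : ℤ) ∣ W d c n}

/-! By Fermat, `W_k(c) ≡ k c (mod d)`, so `d ∣ W_d(c)` for every `c`. If `dⁿ ∣ t` then
`W_k(c + t) ≡ W_k(c) + t (mod dⁿ⁺¹)` for `k ≥ 1`, so `c ↦ c - W_{dⁿ}(c)` is a Newton step: from
`dⁿ ∣ W_{dⁿ}(c)` it produces `c' ≡ c (mod dⁿ)` with `dⁿ⁺¹ ∣ W_{dⁿ}(c')`. Moreover, once `dⁿ ∣ W_M`,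
the sequence `(W_k)_{k ≥ 1}` is `M`-periodic modulo `dⁿ⁺¹`, hence also `dⁿ⁺¹ ∣ W_{dⁿ⁺¹}(c')`.
Iterating from `c = i` gives a `d`-adically convergent sequence whose limit is `aᵢ`; since
`W_{dⁿ}(c) mod dⁿ` only depends on `c mod dⁿ`, every `c ≡ aᵢ (mod dⁿ)` works. -/

theorem IsPrecomplete.exists_pow_dvd_sub {R : Type*} [CommRing R] {x : R}
    [IsPrecomplete (Ideal.span {x}) R] {f : ℕ → R} (hf : ∀ n, x ^ n ∣ f (n + 1) - f n) :
    ∃ L, ∀ n, x ^ n ∣ f n - L := by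
  have h_smodEq : ∀ {a b : R} {n : ℕ},
      a ≡ b [SMOD (Ideal.span {x} ^ n • ⊤ : Ideal R)] ↔ x ^ n ∣ a - b := by
    simp [SModEq.sub_mem, Ideal.span_singleton_pow, Ideal.mem_span_singleton]
  have h_cauchy : ∀ {m n : ℕ}, m ≤ n → x ^ m ∣ f m - f n := by
    intro m n hmn
    induction n, hmn using Nat.le_induction with
    | base => simp
    | succ n hmn ih =>
      simpa using ih.sub ((pow_dvd_pow x hmn).trans (hf n))
  obtain ⟨L, hL⟩ := IsPrecomplete.prec inferInstance (fun hmn => h_smodEq.2 (h_cauchy hmn))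
  exact ⟨L, fun n => h_smodEq.1 (hL n)⟩

lemma W_succ (d : ℕ) (c : ℤ) (n : ℕ) : W d c (n + 1) = W d c n ^ d + c :=
  Function.iterate_succ_apply' _ _ _

lemma W_one {d : ℕ} (hd : d ≠ 0) (c : ℤ) : W d c 1 = c := by
  simp [W, hd]

lemma W_modEq_W (d : ℕ) {M c c' : ℤ} (h : c ≡ c' [ZMOD M]) :
    ∀ k, W d c k ≡ W d c' k [ZMOD M]
  | 0 => rfl
  | k + 1 => by simpa only [W_succ] using ((W_modEq_W d h k).pow d).add h

lemma W_param_zero {d : ℕ} (hd : d ≠ 0) : ∀ k, W d 0 k = 0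
  | 0 => rfl
  | k + 1 => by simp [W_succ, W_param_zero hd k, hd]

lemma dvd_W_of_dvd {d : ℕ} (hd : d ≠ 0) {M c : ℤ} (h : M ∣ c) (k : ℕ) : M ∣ W d c k := by
  simpa [W_param_zero hd, Int.modEq_zero_iff_dvd] using
    W_modEq_W d (Int.modEq_zero_iff_dvd.2 h) k

lemma W_modEq_mul (p : ℕ) [Fact p.Prime] (c : ℤ) : ∀ k : ℕ, W p c k ≡ k * c [ZMOD p]
  | 0 => by simp [W]
  | k + 1 => by
    rw [← ZMod.intCast_eq_intCast_iff]
    have ih := (ZMod.intCast_eq_intCast_iff _ _ _).2 (W_modEq_mul p c k)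
    push_cast [W_succ, ih, ZMod.pow_card]
    ring

lemma dvd_W_self (p : ℕ) [Fact p.Prime] (c : ℤ) : (p : ℤ) ∣ W p c p := by
  simpa [Int.modEq_zero_iff_dvd] using
    (W_modEq_mul p c p).trans (Int.modEq_zero_iff_dvd.2 (dvd_mul_right (p : ℤ) c))

lemma pow_succ_dvd_add_pow_sub_pow {R : Type*} [CommRing R] {d n : ℕ} (hn : 1 ≤ n) {t : R}
    (ht : (d : R) ^ n ∣ t) (x : R) : (d : R) ^ (n + 1) ∣ (x + t) ^ d - x ^ d := by
  have h_sq : (d : R) ^ (n + 1) ∣ t ^ 2 :=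
    (pow_dvd_pow (d : R) (by omega : n + 1 ≤ n * 2)).trans
      (pow_mul (d : R) n 2 ▸ pow_dvd_pow_of_dvd ht 2)
  have h_lin : (d : R) ^ (n + 1) ∣ x ^ (d - 1) * t * d := by
    rw [pow_succ]
    exact (mul_dvd_mul ht dvd_rfl).trans (mul_dvd_mul_right (dvd_mul_left _ _) _)
  have := dvd_add (h_sq.trans (sq_dvd_add_pow_sub_sub t x d)) h_lin
  rwa [sub_right_comm, sub_add_cancel] at this

lemma W_param_add_modEq {d n : ℕ} (hd : d ≠ 0) (hn : 1 ≤ n) (c : ℤ) {t : ℤ}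
    (ht : (d : ℤ) ^ n ∣ t) {k : ℕ} (hk : 1 ≤ k) :
    W d (c + t) k ≡ W d c k + t [ZMOD (d : ℤ) ^ (n + 1)] := by
  induction k, hk using Nat.le_induction with
  | base => simp [W_one hd]
  | succ k _ ih =>
    rw [W_succ, W_succ]
    calc W d (c + t) k ^ d + (c + t) ≡ (W d c k + t) ^ d + (c + t) [ZMOD (d : ℤ) ^ (n + 1)] :=
          (ih.pow d).add_right _
      _ ≡ W d c k ^ d + (c + t) [ZMOD (d : ℤ) ^ (n + 1)] :=
          (Int.modEq_iff_dvd.2 (pow_succ_dvd_add_pow_sub_pow hn ht _)).symm.add_right _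
      _ = W d c k ^ d + c + t := by ring

lemma W_add_modEq {d n M : ℕ} (hd : 2 ≤ d) (hn : 1 ≤ n) {c : ℤ} (hM : (d : ℤ) ^ n ∣ W d c M)
    {k : ℕ} (hk : 1 ≤ k) : W d c (M + k) ≡ W d c k [ZMOD (d : ℤ) ^ (n + 1)] := by
  induction k, hk using Nat.le_induction with
  | base =>
    have h_pow : (d : ℤ) ^ (n + 1) ∣ W d c M ^ d :=
      (pow_dvd_pow _ (by nlinarith)).trans (pow_mul (d : ℤ) n d ▸ pow_dvd_pow_of_dvd hM d)
    rw [W_succ, W_one (by omega)]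
    simpa using (Int.modEq_zero_iff_dvd.2 h_pow).add_right c
  | succ k _ ih =>
    rw [← add_assoc, W_succ, W_succ]
    exact (ih.pow d).add_right c

lemma W_mul_modEq {d n M : ℕ} (hd : 2 ≤ d) (hn : 1 ≤ n) (hM₀ : 0 < M) {c : ℤ}
    (hM : (d : ℤ) ^ n ∣ W d c M) {j : ℕ} (hj : 1 ≤ j) :
    W d c (j * M) ≡ W d c M [ZMOD (d : ℤ) ^ (n + 1)] := by
  induction j, hj using Nat.le_induction with
  | base => rw [one_mul]
  | succ j hj ih =>
    rw [add_one_mul, add_comm (j * M)]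
    exact (W_add_modEq hd hn hM (Nat.one_le_iff_ne_zero.2 (by positivity))).trans ih

lemma W_pow_succ_modEq {d n : ℕ} (hd : 2 ≤ d) (hn : 1 ≤ n) {c : ℤ}
    (h : (d : ℤ) ^ n ∣ W d c (d ^ n)) :
    W d c (d ^ (n + 1)) ≡ W d c (d ^ n) [ZMOD (d : ℤ) ^ (n + 1)] := by
  rw [pow_succ' d n]
  exact W_mul_modEq hd hn (by positivity) h (j := d) (by omega)

lemma pow_succ_dvd_W_sub_W {d n : ℕ} (hd : 2 ≤ d) (hn : 1 ≤ n) {c : ℤ}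
    (h : (d : ℤ) ^ n ∣ W d c (d ^ n)) :
    (d : ℤ) ^ (n + 1) ∣ W d (c - W d c (d ^ n)) (d ^ (n + 1)) := by
  have h_lift : W d (c - W d c (d ^ n)) (d ^ n) ≡ 0 [ZMOD (d : ℤ) ^ (n + 1)] := by
    simpa [← sub_eq_add_neg] using
      W_param_add_modEq (by omega) hn c h.neg_right (Nat.one_le_pow n d (by omega))
  have h_lift' : (d : ℤ) ^ n ∣ W d (c - W d c (d ^ n)) (d ^ n) :=
    (pow_dvd_pow _ n.le_succ).trans (Int.modEq_zero_iff_dvd.1 h_lift)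
  exact Int.modEq_zero_iff_dvd.1 ((W_pow_succ_modEq hd hn h_lift').trans h_lift)

/-- Both levels `0` and `1` start at `i` (Fermat gives `d ∣ W_d(i)`); the Newton step
`c ↦ c - W_{dⁿ}(c)` is only valid from level `n = 1` on. -/
def henselApprox (d : ℕ) (i : ℤ) : ℕ → ℤ
  | 0 => i
  | 1 => i
  | n + 2 => henselApprox d i (n + 1) - W d (henselApprox d i (n + 1)) (d ^ (n + 1))

section Prime

variable (p : ℕ) [hp : Fact p.Prime]

lemma pow_dvd_W_henselApprox (i : ℤ) : ∀ n, (p : ℤ) ^ n ∣ W p (henselApprox p i n) (p ^ n)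
  | 0 => by simp
  | 1 => by simpa [henselApprox] using dvd_W_self p i
  | n + 2 => pow_succ_dvd_W_sub_W hp.out.two_le (by omega) (pow_dvd_W_henselApprox i (n + 1))

lemma henselApprox_succ_modEq (i : ℤ) :
    ∀ n, henselApprox p i (n + 1) ≡ henselApprox p i n [ZMOD (p : ℤ) ^ n]
  | 0 => by simp [Int.modEq_one]
  | n + 1 => by
    simpa [henselApprox] using
      (Int.modEq_zero_iff_dvd.2 (pow_dvd_W_henselApprox p i (n + 1))).sub_left
        (henselApprox p i (n + 1))

lemma exists_padicInt_pow_dvd_henselApprox_sub (i : ℤ) :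
    ∃ a : ℤ_[p], ∀ n, (p : ℤ_[p]) ^ n ∣ (henselApprox p i n : ℤ_[p]) - a := by
  have : IsPrecomplete (Ideal.span {(p : ℤ_[p])}) ℤ_[p] :=
    PadicInt.maximalIdeal_eq_span_p (p := p) ▸ inferInstance
  refine IsPrecomplete.exists_pow_dvd_sub fun n => ?_
  exact_mod_cast (PadicInt.pow_p_dvd_int_iff n _).2
    (Int.modEq_iff_dvd.1 (henselApprox_succ_modEq p i n).symm)

end Prime

/-- For prime `d`, there are `d`-adic integers `a₁, …, a_{d-1}` with `aᵢ ≡ i (mod d)`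
such that whenever `c ≡ 0 (mod dⁿ)` or `c ≡ aᵢ (mod dⁿ)` in `ℤ_d`, we have
`dⁿ ∈ D_{d,c}`. -/
theorem powers_of_prime_degree (d : ℕ) [Fact d.Prime] :
    ∃ a : ℕ → ℤ_[d],
      (∀ i : ℕ, 1 ≤ i → i ≤ d - 1 → (d : ℤ_[d]) ∣ (a i - (i : ℤ_[d]))) ∧
      (∀ n : ℕ, 1 ≤ n → ∀ c : ℤ,
        ((d : ℤ) ^ n ∣ c ∨
          ∃ i : ℕ, 1 ≤ i ∧ i ≤ d - 1 ∧ (d : ℤ_[d]) ^ n ∣ ((c : ℤ_[d]) - a i)) →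
        d ^ n ∈ Dset d c) := by
  have hd : d.Prime := Fact.out
  choose a ha using fun i : ℕ => exists_padicInt_pow_dvd_henselApprox_sub d i
  refine ⟨a, fun i _ _ => ?_, fun n _ c hc => ⟨Nat.one_le_pow _ _ hd.pos, ?_⟩⟩
  · simpa [henselApprox] using dvd_sub_comm.1 (ha i 1)
  push_cast
  rcases hc with hc | ⟨i, -, -, hc⟩
  · exact dvd_W_of_dvd hd.ne_zero hc _
  · have h_modEq : c ≡ henselApprox d i n [ZMOD (d : ℤ) ^ n] := by
      rw [Int.modEq_iff_dvd, dvd_sub_comm, ← PadicInt.pow_p_dvd_int_iff]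
      simpa using dvd_sub hc (ha i n)
    exact Int.modEq_zero_iff_dvd.1
      ((W_modEq_W d h_modEq _).trans (Int.modEq_zero_iff_dvd.2 (pow_dvd_W_henselApprox d i n)))
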